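/- Let Γ be an admissible cost function, let G be a random graph generated according to a hierarchical stochastic block model (HSBM), let ψ be the hidden labelling of vertices to the k bottom-level clusters, and assume every cluster is nonempty. If T is a ground-truth tree for G (a generating tree for the expected graph Ḡ), then E[Γ(T) | ψ] ≤ min over all cluster trees T' of E[Γ(T') | ψ]; moreover, for any cluster tree T', E[Γ(T) | ψ] = E[Γ(T') | ψ] if and only if T' is a ground-truth tree. -/

import Mathlib

open scoped BigOperators

attribute [local instance] Classical.propDecidable

noncomputable section

/-! ### Cluster trees -/

/-- A (binary, rooted) hierarchical-clustering tree whose leaves are labelled by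
vertices of `V`. -/
inductive ClusterTree (V : Type) : Type where
  | leaf : V → ClusterTree V
  | node : ClusterTree V → ClusterTree V → ClusterTree V

namespace ClusterTree

variable {V : Type}

/-- The list of leaf labels of the tree (left-to-right). -/
def leavesList : ClusterTree V → List V
  | leaf v => [v]
  | node L R => leavesList L ++ leavesList R

/-- The set of leaf labels of the tree. -/
def leaves [DecidableEq V] (T : ClusterTree V) : Finset V :=
  T.leavesList.toFinset

end ClusterTree

section Defs

variable {V : Type}

/-- `T` is a cluster tree for the whole (finite) vertex set `V`: its leaves are
pairwise distinct and exhaust the vertices. -/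
def IsClusterTree [DecidableEq V] [Fintype V] (T : ClusterTree V) : Prop :=
  T.leavesList.Nodup ∧ T.leaves = Finset.univ

/-- `IsSubtreeOf s T` : `s` occurs as a rooted subtree of `T`. -/
def IsSubtreeOf : ClusterTree V → ClusterTree V → Prop
  | s, ClusterTree.leaf v => s = ClusterTree.leaf v
  | s, ClusterTree.node L R => s = ClusterTree.node L R ∨ IsSubtreeOf s L ∨ IsSubtreeOf s R

/-- The subtree of `T` rooted at the lowest common ancestor of the leaves `x` and `y`. -/
def lcaSubtree [DecidableEq V] : ClusterTree V → V → V → ClusterTree V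
  | ClusterTree.leaf v, _, _ => ClusterTree.leaf v
  | ClusterTree.node L R, x, y =>
    if x ∈ L.leaves ∧ y ∈ L.leaves then lcaSubtree L x y
    else if x ∈ R.leaves ∧ y ∈ R.leaves then lcaSubtree R x y
    else ClusterTree.node L R

/-- `w(A, B) = ∑_{a ∈ A, b ∈ B} w a b`. -/
def cutWeight (w : V → V → ℝ) (A B : Finset V) : ℝ := ∑ a ∈ A, ∑ b ∈ B, w a b

/-- `w(A) = ∑_{a, b ∈ A} w a b` (ordered pairs; each edge counted twice). -/
def innerWeight (w : V → V → ℝ) (A : Finset V) : ℝ := ∑ a ∈ A, ∑ b ∈ A, w a b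

/-- `∑_{e ∈ E} w(e)`, for a symmetric weight function with zero diagonal. -/
def totalWeight [Fintype V] (w : V → V → ℝ) : ℝ := (∑ u : V, ∑ v : V, w u v) / 2

/-- Cost of a cluster tree: each internal node `N` with children `N₁, N₂`
contributes `w(V(N₁), V(N₂)) · g(|V(N₁)|, |V(N₂)|)`. -/
def treeCost [DecidableEq V] (w : V → V → ℝ) (g : ℕ → ℕ → ℝ) : ClusterTree V → ℝ
  | ClusterTree.leaf _ => 0
  | ClusterTree.node L R =>
      cutWeight w L.leaves R.leaves * g L.leaves.card R.leaves.card
        + treeCost w g L + treeCost w g R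

/-- Dasgupta's cost (= `treeCost` with `g (a, b) = a + b`). -/
def dasguptaCost [DecidableEq V] (w : V → V → ℝ) : ClusterTree V → ℝ
  | ClusterTree.leaf _ => 0
  | ClusterTree.node L R =>
      ((L.leaves.card + R.leaves.card : ℕ) : ℝ) * cutWeight w L.leaves R.leaves
        + dasguptaCost w L + dasguptaCost w R

/-! ### Generating trees -/

/-- `T` is a generating tree for the similarity graph `w` : there is a nonnegative
weight function on the internal nodes, non-increasing from leaves towards the root,
realizing every edge weight at the corresponding LCA. -/
def IsGenerating [DecidableEq V] (w : V → V → ℝ) (T : ClusterTree V) : Prop :=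
  ∃ W : ClusterTree V → ℝ,
    (∀ s, IsSubtreeOf s T → 0 ≤ W s) ∧
    (∀ L R, IsSubtreeOf (ClusterTree.node L R) T →
      ∀ s, IsSubtreeOf s L ∨ IsSubtreeOf s R → W (ClusterTree.node L R) ≤ W s) ∧
    (∀ x y, x ∈ T.leaves → y ∈ T.leaves → x ≠ y → w x y = W (lcaSubtree T x y))

/-- Generating tree in the dissimilarity setting (weights non-decreasing from
leaves towards the root). -/
def IsGeneratingDissim [DecidableEq V] (w : V → V → ℝ) (T : ClusterTree V) : Prop :=
  ∃ W : ClusterTree V → ℝ,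
    (∀ s, IsSubtreeOf s T → 0 ≤ W s) ∧
    (∀ L R, IsSubtreeOf (ClusterTree.node L R) T →
      ∀ s, IsSubtreeOf s L ∨ IsSubtreeOf s R → W s ≤ W (ClusterTree.node L R)) ∧
    (∀ x y, x ∈ T.leaves → y ∈ T.leaves → x ≠ y → w x y = W (lcaSubtree T x y))

/-- Strictly generating tree (similarity setting). -/
def IsStrictlyGenerating [DecidableEq V] (w : V → V → ℝ) (T : ClusterTree V) : Prop :=
  ∃ W : ClusterTree V → ℝ,
    (∀ s, IsSubtreeOf s T → 0 ≤ W s) ∧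
    (∀ L R, IsSubtreeOf (ClusterTree.node L R) T →
      ∀ s, IsSubtreeOf s L ∨ IsSubtreeOf s R → W (ClusterTree.node L R) < W s) ∧
    (∀ x y, x ∈ T.leaves → y ∈ T.leaves → x ≠ y → w x y = W (lcaSubtree T x y))

/-- Strictly generating tree (dissimilarity setting). -/
def IsStrictlyGeneratingDissim [DecidableEq V] (w : V → V → ℝ) (T : ClusterTree V) : Prop :=
  ∃ W : ClusterTree V → ℝ,
    (∀ s, IsSubtreeOf s T → 0 ≤ W s) ∧
    (∀ L R, IsSubtreeOf (ClusterTree.node L R) T →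
      ∀ s, IsSubtreeOf s L ∨ IsSubtreeOf s R → W s < W (ClusterTree.node L R)) ∧
    (∀ x y, x ∈ T.leaves → y ∈ T.leaves → x ≠ y → w x y = W (lcaSubtree T x y))

/-! ### Ultrametrics and ground-truth inputs -/

/-- `d` is an ultrametric on `V`. -/
def IsUltrametric (d : V → V → ℝ) : Prop :=
  (∀ x, d x x = 0) ∧ (∀ x y, d x y = 0 → x = y) ∧ (∀ x y, d x y = d y x) ∧
  (∀ x y, 0 ≤ d x y) ∧ (∀ x y z, d x y ≤ max (d x z) (d y z))

/-- `w` is a similarity graph generated from an ultrametric via a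
non-increasing nonnegative function `f`. -/
def GeneratedFromUltrametric (w : V → V → ℝ) : Prop :=
  ∃ (d : V → V → ℝ) (f : ℝ → ℝ),
    IsUltrametric d ∧
    (∀ a b : ℝ, 0 ≤ a → a ≤ b → f b ≤ f a) ∧
    (∀ a : ℝ, 0 ≤ a → 0 ≤ f a) ∧
    (∀ x y : V, x ≠ y → w x y = f (d x y))

/-- `w` is a dissimilarity graph generated from an ultrametric via a
non-decreasing nonnegative function `f`. -/
def GeneratedFromUltrametricDissim (w : V → V → ℝ) : Prop :=
  ∃ (d : V → V → ℝ) (f : ℝ → ℝ),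
    IsUltrametric d ∧
    (∀ a b : ℝ, 0 ≤ a → a ≤ b → f a ≤ f b) ∧
    (∀ a : ℝ, 0 ≤ a → 0 ≤ f a) ∧
    (∀ x y : V, x ≠ y → w x y = f (d x y))

/-- `w` is a similarity graph generated from a *minimal* ultrametric:
pairs with equal weights are at equal ultrametric distance. -/
def GeneratedFromMinimalUltrametric (w : V → V → ℝ) : Prop :=
  ∃ (d : V → V → ℝ) (f : ℝ → ℝ),
    IsUltrametric d ∧
    (∀ a b : ℝ, 0 ≤ a → a ≤ b → f b ≤ f a) ∧
    (∀ a : ℝ, 0 ≤ a → 0 ≤ f a) ∧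
    (∀ x y : V, x ≠ y → w x y = f (d x y)) ∧
    (∀ u v u' v' : V, u ≠ v → u' ≠ v' → f (d u v) = f (d u' v') → d u v = d u' v')

/-- Dissimilarity analogue of `GeneratedFromMinimalUltrametric`. -/
def GeneratedFromMinimalUltrametricDissim (w : V → V → ℝ) : Prop :=
  ∃ (d : V → V → ℝ) (f : ℝ → ℝ),
    IsUltrametric d ∧
    (∀ a b : ℝ, 0 ≤ a → a ≤ b → f a ≤ f b) ∧
    (∀ a : ℝ, 0 ≤ a → 0 ≤ f a) ∧
    (∀ x y : V, x ≠ y → w x y = f (d x y)) ∧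
    (∀ u v u' v' : V, u ≠ v → u' ≠ v' → f (d u v) = f (d u' v') → d u v = d u' v')

/-- `w` is a `δ`-adversarially-perturbed (similarity) ground-truth input. -/
def IsDeltaPerturbedGroundTruth (w : V → V → ℝ) (δ : ℝ) : Prop :=
  ∃ (d : V → V → ℝ) (f : ℝ → ℝ),
    IsUltrametric d ∧
    (∀ a b : ℝ, 0 ≤ a → a ≤ b → f b ≤ f a) ∧
    (∀ a : ℝ, 0 ≤ a → 0 ≤ f a) ∧
    (∀ x y : V, x ≠ y → f (d x y) ≤ w x y ∧ w x y ≤ δ * f (d x y))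

end Defs

/-- The unit-weight clique on `V`. -/
def cliqueW (V : Type) [DecidableEq V] : V → V → ℝ := fun x y => if x = y then 0 else 1

/-- Admissibility of a cost function (similarity setting): on every similarity graph
generated from a minimal ultrametric, a cluster tree minimizes the cost
iff it is a generating tree. -/
def Admissible (g : ℕ → ℕ → ℝ) : Prop :=
  ∀ (V : Type) [Fintype V] [DecidableEq V] (w : V → V → ℝ),
    GeneratedFromMinimalUltrametric w →
    ∀ T : ClusterTree V, IsClusterTree T →
      ((∀ T' : ClusterTree V, IsClusterTree T' → treeCost w g T ≤ treeCost w g T')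
        ↔ IsGenerating w T)

/-- Admissibility of a value function (dissimilarity setting): on every dissimilarity
graph generated from a minimal ultrametric, a cluster tree maximizes the value
iff it is a generating tree. -/
def AdmissibleDissim (g : ℕ → ℕ → ℝ) : Prop :=
  ∀ (V : Type) [Fintype V] [DecidableEq V] (w : V → V → ℝ),
    GeneratedFromMinimalUltrametricDissim w →
    ∀ T : ClusterTree V, IsClusterTree T →
      ((∀ T' : ClusterTree V, IsClusterTree T' → treeCost w g T' ≤ treeCost w g T)
        ↔ IsGeneratingDissim w T)

/-! ### Agglomerative (linkage) algorithms, modelled as a nondeterministic relation -/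

/-- The initial state of an agglomerative algorithm: all singleton trees. -/
def initState (V : Type) [Fintype V] : Multiset (ClusterTree V) :=
  Finset.univ.val.map ClusterTree.leaf

/-- One merge step of a generic linkage algorithm: merge two candidate trees whose
leaf-set distance `D` is best (w.r.t. `better a b` = "`a` is at least as good as `b`")
among all candidate pairs; any tie-breaking choice is allowed. -/
inductive MergeStep {V : Type} [DecidableEq V] (D : Finset V → Finset V → ℝ)
    (better : ℝ → ℝ → Prop) :
    Multiset (ClusterTree V) → Multiset (ClusterTree V) → Prop where
  | step : ∀ (rest : Multiset (ClusterTree V)) (T1 T2 : ClusterTree V),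
      (∀ (T1' T2' : ClusterTree V) (rest' : Multiset (ClusterTree V)),
          T1 ::ₘ T2 ::ₘ rest = T1' ::ₘ T2' ::ₘ rest' →
          better (D T1.leaves T2.leaves) (D T1'.leaves T2'.leaves)) →
      MergeStep D better (T1 ::ₘ T2 ::ₘ rest) (ClusterTree.node T1 T2 ::ₘ rest)

/-- `T` is a possible output of the linkage algorithm with dissimilarity/similarity
measure `D` and preference `better`. -/
def IsLinkageOutput {V : Type} [Fintype V] [DecidableEq V]
    (D : Finset V → Finset V → ℝ) (better : ℝ → ℝ → Prop) (T : ClusterTree V) : Prop :=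
  Relation.ReflTransGen (MergeStep D better) (initState V) {T}

/-- Average-linkage measure. -/
def avgDist {V : Type} (w : V → V → ℝ) (A B : Finset V) : ℝ :=
  cutWeight w A B / ((A.card : ℝ) * (B.card : ℝ))

/-- Single-linkage measure: `min_{x ∈ A, y ∈ B} w x y`. -/
def minLinkDist {V : Type} [DecidableEq V] (w : V → V → ℝ) (A B : Finset V) : ℝ :=
  (((A ×ˢ B).image fun p => w p.1 p.2).min).untopD 0

/-- Complete-linkage measure: `max_{x ∈ A, y ∈ B} w x y`. -/
def maxLinkDist {V : Type} [DecidableEq V] (w : V → V → ℝ) (A B : Finset V) : ℝ :=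
  (((A ×ˢ B).image fun p => w p.1 p.2).max).unbotD 0

/-! ### Cuts -/

section Cuts

variable {V : Type}

/-- `A ⊕ x` : add `x` to `A` if absent, remove it if present. -/
def symmDiffV [DecidableEq V] (A : Finset V) (x : V) : Finset V :=
  if x ∈ A then A.erase x else insert x A

/-- `(A, B)` is an `ε/|A ∪ B|`-locally-densest cut of the induced subgraph on `A ∪ B`. -/
def IsLocallyDensestCut [DecidableEq V] (w : V → V → ℝ) (ε : ℝ) (A B : Finset V) : Prop :=
  ∀ x ∈ A ∪ B,
    cutWeight w (symmDiffV A x) (symmDiffV B x) /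
        (((symmDiffV A x).card : ℝ) * ((symmDiffV B x).card : ℝ)) ≤
      (1 + ε / ((A ∪ B).card : ℝ)) *
        (cutWeight w A B / ((A.card : ℝ) * (B.card : ℝ)))

/-- Cluster trees obtained by recursively splitting along `ε/n`-locally-densest cuts. -/
def IsRecLocallyDensestCutTree [DecidableEq V] (w : V → V → ℝ) (ε : ℝ) :
    ClusterTree V → Prop
  | ClusterTree.leaf _ => True
  | ClusterTree.node L R =>
      IsLocallyDensestCut w ε L.leaves R.leaves ∧
      IsRecLocallyDensestCutTree w ε L ∧ IsRecLocallyDensestCutTree w ε R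

/-- Cluster trees obtained by recursively splitting along `φ`-approximate sparsest cuts. -/
def IsRecApproxSparsestCutTree [DecidableEq V] (w : V → V → ℝ) (φ : ℝ) :
    ClusterTree V → Prop
  | ClusterTree.leaf _ => True
  | ClusterTree.node L R =>
      (∀ S : Finset V, S ⊆ L.leaves ∪ R.leaves → S.Nonempty → S ⊂ L.leaves ∪ R.leaves →
        cutWeight w L.leaves R.leaves / ((L.leaves.card : ℝ) * (R.leaves.card : ℝ)) ≤
          φ * (cutWeight w S ((L.leaves ∪ R.leaves) \ S) /
            ((S.card : ℝ) * (((L.leaves ∪ R.leaves) \ S).card : ℝ)))) ∧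
      IsRecApproxSparsestCutTree w φ L ∧ IsRecApproxSparsestCutTree w φ R

/-- Cluster trees obtained by recursively splitting along exact sparsest cuts. -/
def IsRecSparsestCutTree [DecidableEq V] (w : V → V → ℝ) : ClusterTree V → Prop
  | ClusterTree.leaf _ => True
  | ClusterTree.node L R =>
      (∀ S : Finset V, S ⊆ L.leaves ∪ R.leaves → S.Nonempty → S ⊂ L.leaves ∪ R.leaves →
        cutWeight w L.leaves R.leaves / ((L.leaves.card : ℝ) * (R.leaves.card : ℝ)) ≤
          cutWeight w S ((L.leaves ∪ R.leaves) \ S) /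
            ((S.card : ℝ) * (((L.leaves ∪ R.leaves) \ S).card : ℝ))) ∧
      IsRecSparsestCutTree w L ∧ IsRecSparsestCutTree w R

/-- Cluster trees obtained by recursively splitting along exact densest cuts. -/
def IsRecDensestCutTree [DecidableEq V] (w : V → V → ℝ) : ClusterTree V → Prop
  | ClusterTree.leaf _ => True
  | ClusterTree.node L R =>
      (∀ S : Finset V, S ⊆ L.leaves ∪ R.leaves → S.Nonempty → S ⊂ L.leaves ∪ R.leaves →
        cutWeight w S ((L.leaves ∪ R.leaves) \ S) /
            ((S.card : ℝ) * (((L.leaves ∪ R.leaves) \ S).card : ℝ)) ≤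
          cutWeight w L.leaves R.leaves / ((L.leaves.card : ℝ) * (R.leaves.card : ℝ))) ∧
      IsRecDensestCutTree w L ∧ IsRecDensestCutTree w R

/-- Cluster trees produced by the bisection 2-Center algorithm (similarity setting). -/
def IsBisection2CenterTree [DecidableEq V] (w : V → V → ℝ) : ClusterTree V → Prop
  | ClusterTree.leaf _ => True
  | ClusterTree.node L R =>
      (∃ u ∈ L.leaves ∪ R.leaves, ∃ v ∈ L.leaves ∪ R.leaves, u ≠ v ∧
        (∃ r : ℝ,
          (∀ x ∈ L.leaves ∪ R.leaves, r ≤ max (w x u) (w x v)) ∧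
          (∀ u' ∈ L.leaves ∪ R.leaves, ∀ v' ∈ L.leaves ∪ R.leaves, u' ≠ v' →
            ∃ x ∈ L.leaves ∪ R.leaves, max (w x u') (w x v') ≤ r)) ∧
        L.leaves = (L.leaves ∪ R.leaves).filter fun x => w x v ≤ w x u) ∧
      IsBisection2CenterTree w L ∧ IsBisection2CenterTree w R

/-- Cluster trees produced by the bisection 2-Center algorithm (dissimilarity setting). -/
def IsBisection2CenterTreeDissim [DecidableEq V] (w : V → V → ℝ) : ClusterTree V → Prop
  | ClusterTree.leaf _ => True
  | ClusterTree.node L R =>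
      (∃ u ∈ L.leaves ∪ R.leaves, ∃ v ∈ L.leaves ∪ R.leaves, u ≠ v ∧
        (∃ r : ℝ,
          (∀ x ∈ L.leaves ∪ R.leaves, min (w x u) (w x v) ≤ r) ∧
          (∀ u' ∈ L.leaves ∪ R.leaves, ∀ v' ∈ L.leaves ∪ R.leaves, u' ≠ v' →
            ∃ x ∈ L.leaves ∪ R.leaves, r ≤ min (w x u') (w x v'))) ∧
        L.leaves = (L.leaves ∪ R.leaves).filter fun x => w x u ≤ w x v) ∧
      IsBisection2CenterTreeDissim w L ∧ IsBisection2CenterTreeDissim w R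

end Cuts

/-! ### Pivot algorithms -/

mutual
/-- Trees produced by the fast pivot algorithm (Algorithm 6 of CKMM):
pick a pivot `p`, split the other vertices into classes of equal similarity to `p`
(in strictly decreasing order of similarity), recurse, and attach along a spine. -/
inductive IsPivotTree {V : Type} [DecidableEq V] (w : V → V → ℝ) : ClusterTree V → Prop where
  | mk : ∀ (p : V) (T : ClusterTree V), PivotSpine w p T → IsPivotTree w T

/-- The spine of the pivot algorithm: `PivotSpine w p T` says that `T` is an iterated
union of the single-vertex tree on `p` with pivot trees of the similarity classes of
`p`, attached in strictly decreasing order of similarity to `p`. -/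
inductive PivotSpine {V : Type} [DecidableEq V] (w : V → V → ℝ) : V → ClusterTree V → Prop where
  | base : ∀ p : V, PivotSpine w p (ClusterTree.leaf p)
  | step : ∀ (p : V) (S T : ClusterTree V) (c : ℝ),
      PivotSpine w p S → IsPivotTree w T →
      (∀ v ∈ T.leaves, w p v = c) →
      (∀ u ∈ S.leaves, u ≠ p → c < w p u) →
      PivotSpine w p (ClusterTree.node S T)
end

mutual
/-- Trees produced by the robust pivot algorithm (Algorithm 7 of CKMM). -/
inductive IsRobustPivotTree {V : Type} [DecidableEq V] (w : V → V → ℝ) :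
    ClusterTree V → Prop where
  | mk : ∀ (p : V) (T : ClusterTree V), RobustPivotSpine w T.leaves p T →
      IsRobustPivotTree w T

/-- `RobustPivotSpine w U p T` : `T` is a prefix (a spine) of a run of the robust pivot
algorithm on the vertex set `U`, started at the pivot `p`.  At each step, `wi` is the
maximum weight of an edge in the cut `(Ṽ, U \ Ṽ)` (where `Ṽ` is the set of already
clustered vertices), and the next block is the least subset of `U \ Ṽ` closed under
adding any vertex having an edge of weight at least `wi` into the block or into `Ṽ`. -/
inductive RobustPivotSpine {V : Type} [DecidableEq V] (w : V → V → ℝ) :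
    Finset V → V → ClusterTree V → Prop where
  | base : ∀ (U : Finset V) (p : V), RobustPivotSpine w U p (ClusterTree.leaf p)
  | step : ∀ (U : Finset V) (p : V) (S T : ClusterTree V) (wi : ℝ),
      RobustPivotSpine w U p S →
      IsRobustPivotTree w T →
      (∃ p1 ∈ S.leaves, ∃ p2 ∈ U \ S.leaves, w p1 p2 = wi) →
      (∀ q1 ∈ S.leaves, ∀ q2 ∈ U \ S.leaves, w q1 q2 ≤ wi) →
      T.leaves ⊆ U \ S.leaves →
      (∀ u ∈ U \ S.leaves, (∃ v ∈ T.leaves ∪ S.leaves, wi ≤ w u v) → u ∈ T.leaves) →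
      (∀ C : Finset V, C ⊆ U \ S.leaves →
        (∀ u ∈ U \ S.leaves, (∃ v ∈ C ∪ S.leaves, wi ≤ w u v) → u ∈ C) →
        T.leaves ⊆ C) →
      RobustPivotSpine w U p (ClusterTree.node S T)
end

/-! ### Paths and caterpillars -/

/-- Attach the leaves from the list `l` one by one on top of `t` (a "spine"). -/
def spineTree {V : Type} : ClusterTree V → List V → ClusterTree V
  | t, [] => t
  | t, v :: vs => spineTree (ClusterTree.node t (ClusterTree.leaf v)) vs

/-- The unit-weight path on `n` vertices. -/
def pathW (n : ℕ) (i j : Fin n) : ℝ :=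
  if (i : ℕ) + 1 = (j : ℕ) ∨ (j : ℕ) + 1 = (i : ℕ) then 1 else 0

/-! ### Random graphs: hierarchical stochastic block model -/

/-- Index set for the potential edges of a graph on `Fin n`. -/
abbrev EdgeIdx (n : ℕ) := {p : Fin n × Fin n // p.1 < p.2}

/-- The (0/1) weight function of the random graph described by the edge
configuration `c`. -/
def configW {n : ℕ} (c : EdgeIdx n → Bool) (u v : Fin n) : ℝ :=
  if h : u < v then (if c ⟨(u, v), h⟩ then 1 else 0)
  else if h' : v < u then (if c ⟨(v, u), h'⟩ then 1 else 0)
  else 0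

/-- The probability of the edge configuration `c` when each edge `e` is present
independently with probability `q e`. -/
def configProb {n : ℕ} (q : Fin n → Fin n → ℝ) (c : EdgeIdx n → Bool) : ℝ :=
  ∏ e : EdgeIdx n, if c e then q e.val.1 e.val.2 else 1 - q e.val.1 e.val.2

/-- The expected cost `E[Γ(T) | ψ]` of a fixed cluster tree `T`, over the random
choice of the edges (with edge probabilities `q`). -/
def expectedCost {n : ℕ} (g : ℕ → ℕ → ℝ) (q : Fin n → Fin n → ℝ)
    (T : ClusterTree (Fin n)) : ℝ :=
  ∑ c : EdgeIdx n → Bool, configProb q c * treeCost (configW c) g T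

/-- The (fixed, size-independent) data of a hierarchical stochastic block model with
`k` bottom-level clusters: a generating tree `Ttil` with weights `Wtil` in `(0,1)`
(the graph `G̃ₖ` on `k` vertices generated from an ultrametric), and intra-cluster
probabilities `p i ∈ (0,1]` exceeding the weight of the parent of leaf `i`. -/
structure HSBM (k : ℕ) where
  Ttil : ClusterTree (Fin k)
  Wtil : ClusterTree (Fin k) → ℝ
  p : Fin k → ℝ
  ttil_isClusterTree : IsClusterTree Ttil
  wtil_pos : ∀ L R, IsSubtreeOf (ClusterTree.node L R) Ttil →
    0 < Wtil (ClusterTree.node L R)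
  wtil_lt_one : ∀ L R, IsSubtreeOf (ClusterTree.node L R) Ttil →
    Wtil (ClusterTree.node L R) < 1
  wtil_mono : ∀ L R, IsSubtreeOf (ClusterTree.node L R) Ttil →
    ∀ s, IsSubtreeOf s L ∨ IsSubtreeOf s R → Wtil (ClusterTree.node L R) ≤ Wtil s
  p_pos : ∀ i, 0 < p i
  p_le_one : ∀ i, p i ≤ 1
  p_gt_parent : ∀ L R, IsSubtreeOf (ClusterTree.node L R) Ttil →
    ∀ i : Fin k, L = ClusterTree.leaf i ∨ R = ClusterTree.leaf i →
      Wtil (ClusterTree.node L R) < p i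

/-- The edge probabilities of the HSBM `M` with sparsity `α`, given the assignment
`ψ` of vertices to bottom-level clusters.  These are also the edge weights of the
expected graph `Ḡ`. -/
def HSBM.edgeProb {k : ℕ} (M : HSBM k) (α : ℝ) {n : ℕ} (ψ : Fin n → Fin k) :
    Fin n → Fin n → ℝ := fun u v =>
  if ψ u = ψ v then α * M.p (ψ u)
  else α * M.Wtil (lcaSubtree M.Ttil (ψ u) (ψ v))

/-- The probability of the sample `ω = (ψ, c)` (labels and edges) of the HSBM `M`
with label proportions `f` and sparsity `α`. -/
def hsbmProb {k : ℕ} (M : HSBM k) (f : Fin k → ℝ) (α : ℝ) {n : ℕ}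
    (ω : (Fin n → Fin k) × (EdgeIdx n → Bool)) : ℝ :=
  (∏ v : Fin n, f (ω.1 v)) * configProb (M.edgeProb α ω.1) ω.2

/-- The common cost `κ(n)` of all cluster trees of the unit-weight clique on `n`
vertices (computed on the caterpillar tree). -/
def cliqueTreeCost (g : ℕ → ℕ → ℝ) (n : ℕ) : ℝ :=
  ∑ i ∈ Finset.range n, (i : ℝ) * g i 1

/-- The smoothness property: `max {g(n₁,n₂) : n₁+n₂ = n} = O(κ(n)/n²)`. -/
def SmoothCost (g : ℕ → ℕ → ℝ) : Prop :=
  ∃ C : ℝ, 0 < C ∧ ∀ n1 n2 : ℕ, 1 ≤ n1 → 1 ≤ n2 →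
    g n1 n2 * (((n1 + n2 : ℕ) : ℝ)) ^ 2 ≤ C * cliqueTreeCost g (n1 + n2)

end

noncomputable section AuxProof

namespace ClusterTree
variable {V : Type}

lemma isSubtreeOf_refl (t : ClusterTree V) : IsSubtreeOf t t := by
  cases t with
  | leaf v => exact rfl
  | node L R => exact Or.inl rfl

lemma isSubtreeOf_trans : ∀ {a b c : ClusterTree V},
    IsSubtreeOf a b → IsSubtreeOf b c → IsSubtreeOf a c
  | a, b, .leaf v, hab, hbc => by
    simp only [IsSubtreeOf] at hbc; subst hbc; exact hab
  | a, b, .node L R, hab, hbc => by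
    rcases hbc with h | h | h
    · subst h
      exact hab
    · exact Or.inr (Or.inl (isSubtreeOf_trans hab h))
    · exact Or.inr (Or.inr (isSubtreeOf_trans hab h))

lemma leavesList_sublist : ∀ {s t : ClusterTree V}, IsSubtreeOf s t →
    s.leavesList.Sublist t.leavesList
  | s, .leaf v, h => by simp only [IsSubtreeOf] at h; subst h; exact List.Sublist.refl _
  | s, .node L R, h => by
    rcases h with h | h | h
    · subst h; exact List.Sublist.refl _
    · exact (leavesList_sublist h).trans (List.sublist_append_left _ _)
    · exact (leavesList_sublist h).trans (List.sublist_append_right _ _)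

variable [DecidableEq V]

lemma mem_leaves_node {L R : ClusterTree V} {x : V} :
    x ∈ (ClusterTree.node L R).leaves ↔ x ∈ L.leaves ∨ x ∈ R.leaves := by
  simp [leaves, leavesList]

lemma leaves_subset {s t : ClusterTree V} (h : IsSubtreeOf s t) :
    ∀ x ∈ s.leaves, x ∈ t.leaves := by
  intro x hx
  simp only [leaves, List.mem_toFinset] at hx ⊢
  exact (leavesList_sublist h).mem hx

lemma nodup_of_node {L R : ClusterTree V}
    (h : (ClusterTree.node L R).leavesList.Nodup) :
    L.leavesList.Nodup ∧ R.leavesList.Nodup ∧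
      ∀ x, x ∈ L.leaves → x ∉ R.leaves := by
  simp only [leavesList, List.nodup_append] at h
  refine ⟨h.1, h.2.1, fun x hxL hxR => ?_⟩
  simp only [leaves, List.mem_toFinset] at hxL hxR
  exact h.2.2 x hxL x hxR rfl

lemma nodup_subtree {s t : ClusterTree V} (h : IsSubtreeOf s t)
    (ht : t.leavesList.Nodup) : s.leavesList.Nodup :=
  ht.sublist (leavesList_sublist h)

lemma lcaSubtree_isSubtreeOf : ∀ (t : ClusterTree V) (x y : V),
    IsSubtreeOf (lcaSubtree t x y) t
  | .leaf v, x, y => by simp only [lcaSubtree]; exact rfl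
  | .node L R, x, y => by
    simp only [lcaSubtree]
    split
    · exact Or.inr (Or.inl (lcaSubtree_isSubtreeOf L x y))
    · split
      · exact Or.inr (Or.inr (lcaSubtree_isSubtreeOf R x y))
      · exact Or.inl rfl

lemma lcaSubtree_comm : ∀ (t : ClusterTree V) (x y : V),
    lcaSubtree t x y = lcaSubtree t y x
  | .leaf v, x, y => rfl
  | .node L R, x, y => by
    have e1 : (y ∈ L.leaves ∧ x ∈ L.leaves) = (x ∈ L.leaves ∧ y ∈ L.leaves) := by
      rw [and_comm]
    have e2 : (y ∈ R.leaves ∧ x ∈ R.leaves) = (x ∈ R.leaves ∧ y ∈ R.leaves) := by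
      rw [and_comm]
    simp only [lcaSubtree, e1, e2, lcaSubtree_comm L x y, lcaSubtree_comm R x y]

lemma lcaSubtree_node_of_ne : ∀ (t : ClusterTree V) (x y : V),
    x ∈ t.leaves → y ∈ t.leaves → x ≠ y →
    ∃ L R, lcaSubtree t x y = ClusterTree.node L R ∧
      IsSubtreeOf (ClusterTree.node L R) t
  | .leaf v, x, y, hx, hy, hxy => by
    simp [leaves, leavesList] at hx hy
    exact absurd (hx.trans hy.symm) hxy
  | .node L R, x, y, hx, hy, hxy => by
    simp only [lcaSubtree]
    by_cases h1 : x ∈ L.leaves ∧ y ∈ L.leaves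
    · rw [if_pos h1]
      obtain ⟨A, B, hAB, hsub⟩ := lcaSubtree_node_of_ne L x y h1.1 h1.2 hxy
      exact ⟨A, B, hAB, isSubtreeOf_trans hsub (Or.inr (Or.inl (isSubtreeOf_refl L)))⟩
    · rw [if_neg h1]
      by_cases h2 : x ∈ R.leaves ∧ y ∈ R.leaves
      · rw [if_pos h2]
        obtain ⟨A, B, hAB, hsub⟩ := lcaSubtree_node_of_ne R x y h2.1 h2.2 hxy
        exact ⟨A, B, hAB, isSubtreeOf_trans hsub (Or.inr (Or.inr (isSubtreeOf_refl R)))⟩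
      · rw [if_neg h2]
        exact ⟨L, R, rfl, Or.inl rfl⟩

end ClusterTree

end AuxProof
noncomputable section AuxProof2

namespace ClusterTree
variable {V : Type} [DecidableEq V]

/-- Weight of any internal node is at most `p i` for any leaf `i` below it. -/
lemma isSubtreeOf_node_left (L R : ClusterTree V) :
    IsSubtreeOf L (ClusterTree.node L R) :=
  Or.inr (Or.inl (isSubtreeOf_refl L))

lemma isSubtreeOf_node_right (L R : ClusterTree V) :
    IsSubtreeOf R (ClusterTree.node L R) :=
  Or.inr (Or.inr (isSubtreeOf_refl R))

lemma W_le_p {Ttil : ClusterTree V} {W : ClusterTree V → ℝ} {p : V → ℝ}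
    (hmono : ∀ L R, IsSubtreeOf (ClusterTree.node L R) Ttil →
      ∀ s, IsSubtreeOf s L ∨ IsSubtreeOf s R → W (ClusterTree.node L R) ≤ W s)
    (hp : ∀ L R, IsSubtreeOf (ClusterTree.node L R) Ttil →
      ∀ i, L = ClusterTree.leaf i ∨ R = ClusterTree.leaf i →
        W (ClusterTree.node L R) < p i) :
    ∀ (s : ClusterTree V), IsSubtreeOf s Ttil →
      ∀ L R, s = ClusterTree.node L R → ∀ i ∈ s.leaves, W s ≤ p i := by
  intro s
  induction s with
  | leaf v => intro _ L R h; exact absurd h (by simp)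
  | node A B ihA ihB =>
    intro hsub L R _ i hi
    rcases mem_leaves_node.mp hi with hiA | hiB
    · cases A with
      | leaf v =>
        have : i = v := by simpa [leaves, leavesList] using hiA
        subst this
        exact (hp _ _ hsub i (Or.inl rfl)).le
      | node A1 A2 =>
        have h1 : W (ClusterTree.node (ClusterTree.node A1 A2) B) ≤
            W (ClusterTree.node A1 A2) :=
          hmono _ _ hsub _ (Or.inl (isSubtreeOf_refl _))
        have h2 := ihA (isSubtreeOf_trans (isSubtreeOf_node_left _ B) hsub)
          A1 A2 rfl i hiA
        exact h1.trans h2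
    · cases B with
      | leaf v =>
        have : i = v := by simpa [leaves, leavesList] using hiB
        subst this
        exact (hp _ _ hsub i (Or.inr rfl)).le
      | node B1 B2 =>
        have h1 : W (ClusterTree.node A (ClusterTree.node B1 B2)) ≤
            W (ClusterTree.node B1 B2) :=
          hmono _ _ hsub _ (Or.inr (isSubtreeOf_refl _))
        have h2 := ihB (isSubtreeOf_trans (isSubtreeOf_node_right A _) hsub)
          B1 B2 rfl i hiB
        exact h1.trans h2

/-- The key ultrametric-type inequality for HSBM expected weights. -/
lemma min_Q_le {Ttil : ClusterTree V} {W : ClusterTree V → ℝ} {p : V → ℝ}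
    (hnodup : Ttil.leavesList.Nodup)
    (hmono : ∀ L R, IsSubtreeOf (ClusterTree.node L R) Ttil →
      ∀ s, IsSubtreeOf s L ∨ IsSubtreeOf s R → W (ClusterTree.node L R) ≤ W s)
    (hp : ∀ L R, IsSubtreeOf (ClusterTree.node L R) Ttil →
      ∀ i, L = ClusterTree.leaf i ∨ R = ClusterTree.leaf i →
        W (ClusterTree.node L R) < p i) :
    ∀ (s : ClusterTree V), IsSubtreeOf s Ttil → ∀ i j l,
      i ∈ s.leaves → j ∈ s.leaves → l ∈ s.leaves →
      min (if i = l then p i else W (lcaSubtree s i l))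
          (if j = l then p j else W (lcaSubtree s j l))
        ≤ (if i = j then p i else W (lcaSubtree s i j)) := by
  intro s
  induction s with
  | leaf v =>
    intro _ i j l hi hj hl
    simp only [leaves, leavesList, List.toFinset_cons, List.toFinset_nil,
      Finset.mem_insert, Finset.notMem_empty, or_false] at hi hj hl
    subst hi; subst hj; subst hl
    simp
  | node A B ihA ihB =>
    intro hsub i j l hi hj hl
    have hsubA : IsSubtreeOf A Ttil :=
      isSubtreeOf_trans (isSubtreeOf_node_left A B) hsub
    have hsubB : IsSubtreeOf B Ttil :=
      isSubtreeOf_trans (isSubtreeOf_node_right A B) hsub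
    have hnd := nodup_of_node (nodup_subtree hsub hnodup)
    have hdisj := hnd.2.2
    -- computation of lcaSubtree at the node for various side memberships
    have lcaAA : ∀ x y, x ∈ A.leaves → y ∈ A.leaves →
        lcaSubtree (ClusterTree.node A B) x y = lcaSubtree A x y := by
      intro x y hx hy
      simp only [lcaSubtree]
      rw [if_pos (show x ∈ A.leaves ∧ y ∈ A.leaves from ⟨hx, hy⟩)]
    have lcaBB : ∀ x y, x ∈ B.leaves → y ∈ B.leaves →
        lcaSubtree (ClusterTree.node A B) x y = lcaSubtree B x y := by
      intro x y hx hy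
      have hxA : x ∉ A.leaves := fun h => hdisj x h hx
      simp only [lcaSubtree]
      rw [if_neg (show ¬(x ∈ A.leaves ∧ y ∈ A.leaves) from fun h => hxA h.1),
        if_pos (show x ∈ B.leaves ∧ y ∈ B.leaves from ⟨hx, hy⟩)]
    have lcaAB : ∀ x y, x ∈ A.leaves → y ∈ B.leaves →
        lcaSubtree (ClusterTree.node A B) x y = ClusterTree.node A B := by
      intro x y hx hy
      have hyA : y ∉ A.leaves := fun h => hdisj y h hy
      have hxB : x ∉ B.leaves := fun h => hdisj x hx h
      simp only [lcaSubtree]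
      rw [if_neg (show ¬(x ∈ A.leaves ∧ y ∈ A.leaves) from fun h => hyA h.2),
        if_neg (show ¬(x ∈ B.leaves ∧ y ∈ B.leaves) from fun h => hxB h.1)]
    have lcaBA : ∀ x y, x ∈ B.leaves → y ∈ A.leaves →
        lcaSubtree (ClusterTree.node A B) x y = ClusterTree.node A B := by
      intro x y hx hy
      rw [lcaSubtree_comm]
      exact lcaAB y x hy hx
    have hne : ∀ x y, x ∈ A.leaves → y ∈ B.leaves → x ≠ y := by
      intro x y hx hy h; subst h; exact hdisj x hx hy
    -- W (node A B) ≤ p i for i a leaf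
    have hWp : ∀ x, x ∈ (ClusterTree.node A B).leaves →
        W (ClusterTree.node A B) ≤ p x := by
      intro x hx
      exact W_le_p hmono hp _ hsub A B rfl x hx
    -- W (node A B) ≤ W (lcaSubtree A x y) and within B
    have hWA : ∀ x y, W (ClusterTree.node A B) ≤ W (lcaSubtree A x y) := by
      intro x y
      exact hmono _ _ hsub _ (Or.inl (lcaSubtree_isSubtreeOf A x y))
    have hWB : ∀ x y, W (ClusterTree.node A B) ≤ W (lcaSubtree B x y) := by
      intro x y
      exact hmono _ _ hsub _ (Or.inr (lcaSubtree_isSubtreeOf B x y))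
    rcases mem_leaves_node.mp hi with hiA | hiB <;>
      rcases mem_leaves_node.mp hj with hjA | hjB <;>
        rcases mem_leaves_node.mp hl with hlA | hlB
    · -- all in A
      have := ihA hsubA i j l hiA hjA hlA
      rwa [lcaAA i l hiA hlA, lcaAA j l hjA hlA, lcaAA i j hiA hjA]
    · -- i,j ∈ A, l ∈ B
      rw [lcaAB i l hiA hlB, lcaAB j l hjA hlB,
        if_neg (hne i l hiA hlB), if_neg (hne j l hjA hlB)]
      by_cases hij : i = j
      · rw [if_pos hij]
        exact (min_le_left _ _).trans (hWp i (mem_leaves_node.mpr (Or.inl hiA)))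
      · rw [if_neg hij, lcaAA i j hiA hjA]
        exact (min_le_left _ _).trans (hWA i j)
    · -- i ∈ A, j ∈ B, l ∈ A
      have hij := hne i j hiA hjB
      rw [if_neg hij, lcaAB i j hiA hjB, lcaBA j l hjB hlA,
        if_neg (Ne.symm (hne l j hlA hjB))]
      exact min_le_right _ _
    · -- i ∈ A, j ∈ B, l ∈ B
      have hij := hne i j hiA hjB
      rw [if_neg hij, lcaAB i j hiA hjB, lcaAB i l hiA hlB,
        if_neg (hne i l hiA hlB)]
      exact min_le_left _ _
    · -- i ∈ B, j ∈ A, l ∈ A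
      have hij := Ne.symm (hne j i hjA hiB)
      rw [if_neg hij, lcaBA i j hiB hjA, lcaBA i l hiB hlA,
        if_neg (Ne.symm (hne l i hlA hiB))]
      exact min_le_left _ _
    · -- i ∈ B, j ∈ A, l ∈ B
      have hij := Ne.symm (hne j i hjA hiB)
      rw [if_neg hij, lcaBA i j hiB hjA, lcaAB j l hjA hlB,
        if_neg (hne j l hjA hlB)]
      exact min_le_right _ _
    · -- i,j ∈ B, l ∈ A
      rw [lcaBA i l hiB hlA, lcaBA j l hjB hlA,
        if_neg (Ne.symm (hne l i hlA hiB)), if_neg (Ne.symm (hne l j hlA hjB))]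
      by_cases hij : i = j
      · rw [if_pos hij]
        exact (min_le_left _ _).trans (hWp i (mem_leaves_node.mpr (Or.inr hiB)))
      · rw [if_neg hij, lcaBB i j hiB hjB]
        exact (min_le_left _ _).trans (hWB i j)
    · -- all in B
      have := ihB hsubB i j l hiB hjB hlB
      rwa [lcaBB i l hiB hlB, lcaBB j l hjB hlB, lcaBB i j hiB hjB]

end ClusterTree

end AuxProof2
noncomputable section AuxProof3

lemma sum_prod_bool {ι : Type} [Fintype ι] [DecidableEq ι] (f : ι → Bool → ℝ) :
    ∑ c : ι → Bool, ∏ i, f i (c i) = ∏ i, (f i true + f i false) := by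
  rw [← Fintype.prod_sum]
  exact Finset.prod_congr rfl fun i _ => by rw [Fintype.sum_bool]

lemma sum_configProb {n : ℕ} (q : Fin n → Fin n → ℝ) :
    ∑ c : EdgeIdx n → Bool, configProb q c = 1 := by
  have h1 : ∑ c : EdgeIdx n → Bool, configProb q c
      = ∑ c : EdgeIdx n → Bool, ∏ e : EdgeIdx n,
          (fun (e : EdgeIdx n) (b : Bool) =>
            if b then q e.val.1 e.val.2 else 1 - q e.val.1 e.val.2) e (c e) :=
    Finset.sum_congr rfl fun c _ => rfl
  have h2 := sum_prod_bool (fun (e : EdgeIdx n) (b : Bool) =>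
    if b then q e.val.1 e.val.2 else 1 - q e.val.1 e.val.2)
  rw [h1, h2]
  simp

lemma configW_symm {n : ℕ} (c : EdgeIdx n → Bool) (u v : Fin n) :
    configW c u v = configW c v u := by
  unfold configW
  rcases lt_trichotomy u v with h | h | h
  · rw [dif_pos h, dif_neg (not_lt_of_gt h), dif_pos h]
  · subst h
    simp
  · rw [dif_neg (not_lt_of_gt h), dif_pos h, dif_pos h]

lemma exp_configW_lt {n : ℕ} (q : Fin n → Fin n → ℝ) {u v : Fin n} (huv : u < v) :
    ∑ c : EdgeIdx n → Bool, configProb q c * configW c u v = q u v := by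
  classical
  set e₀ : EdgeIdx n := ⟨(u, v), huv⟩ with he₀
  have hW : ∀ c : EdgeIdx n → Bool, configW c u v = if c e₀ then 1 else 0 := by
    intro c
    unfold configW
    rw [dif_pos huv]
  have hprod : ∀ c : EdgeIdx n → Bool, configProb q c * configW c u v =
      ∏ e : EdgeIdx n,
        ((if c e then q e.val.1 e.val.2 else 1 - q e.val.1 e.val.2) *
          (if e = e₀ then (if c e then 1 else 0) else 1)) := by
    intro c
    rw [Finset.prod_mul_distrib, hW c, configProb]
    congr 1
    rw [Finset.prod_ite_eq' Finset.univ e₀ (fun e => if c e then (1:ℝ) else 0),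
      if_pos (Finset.mem_univ _)]
  simp only [hprod]
  rw [sum_prod_bool (fun e b =>
    (if b then q e.val.1 e.val.2 else 1 - q e.val.1 e.val.2) *
      (if e = e₀ then (if b then (1:ℝ) else 0) else 1))]
  have : ∀ e : EdgeIdx n,
      ((if true then q e.val.1 e.val.2 else 1 - q e.val.1 e.val.2) *
        (if e = e₀ then (if true then (1:ℝ) else 0) else 1)) +
      ((if false then q e.val.1 e.val.2 else 1 - q e.val.1 e.val.2) *
        (if e = e₀ then (if false then (1:ℝ) else 0) else 1)) =
      if e = e₀ then q e.val.1 e.val.2 else 1 := by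
    intro e
    by_cases h : e = e₀ <;> simp [h] <;> ring
  rw [Finset.prod_congr rfl fun e _ => this e,
    Finset.prod_ite_eq' Finset.univ e₀ (fun e => q e.val.1 e.val.2),
    if_pos (Finset.mem_univ _)]

lemma exp_configW {n : ℕ} (q : Fin n → Fin n → ℝ) (hsymm : ∀ u v, q u v = q v u)
    (u v : Fin n) :
    ∑ c : EdgeIdx n → Bool, configProb q c * configW c u v =
      if u = v then 0 else q u v := by
  rcases lt_trichotomy u v with h | h | h
  · rw [if_neg (ne_of_lt h)]
    exact exp_configW_lt q h
  · subst h
    rw [if_pos rfl]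
    have : ∀ c : EdgeIdx n → Bool, configW c u u = 0 := by
      intro c; unfold configW; simp
    simp [this]
  · rw [if_neg (ne_of_gt h), hsymm u v]
    calc ∑ c : EdgeIdx n → Bool, configProb q c * configW c u v
        = ∑ c : EdgeIdx n → Bool, configProb q c * configW c v u := by
          simp only [configW_symm]
      _ = q v u := exp_configW_lt q h

lemma expectedCost_eq_treeCost {n : ℕ} (g : ℕ → ℕ → ℝ) (q : Fin n → Fin n → ℝ)
    (hsymm : ∀ u v, q u v = q v u) (T : ClusterTree (Fin n)) :
    expectedCost g q T =
      treeCost (fun u v => if u = v then 0 else q u v) g T := by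
  have hcut : ∀ A B : Finset (Fin n),
      ∑ c : EdgeIdx n → Bool, configProb q c * cutWeight (configW c) A B =
        cutWeight (fun u v => if u = v then 0 else q u v) A B := by
    intro A B
    simp only [cutWeight, Finset.mul_sum]
    rw [Finset.sum_comm]
    refine Finset.sum_congr rfl fun a _ => ?_
    rw [Finset.sum_comm]
    exact Finset.sum_congr rfl fun b _ => exp_configW q hsymm a b
  induction T with
  | leaf v => simp [expectedCost, treeCost]
  | node L R ihL ihR =>
    have key : ∀ c : EdgeIdx n → Bool,
        configProb q c * treeCost (configW c) g (ClusterTree.node L R) =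
          (configProb q c * cutWeight (configW c) L.leaves R.leaves) *
              g L.leaves.card R.leaves.card
            + (configProb q c * treeCost (configW c) g L
              + configProb q c * treeCost (configW c) g R) := by
      intro c
      show configProb q c *
          (cutWeight (configW c) L.leaves R.leaves * g L.leaves.card R.leaves.card
            + treeCost (configW c) g L + treeCost (configW c) g R) = _
      ring
    have expand : expectedCost g q (ClusterTree.node L R) =
        (∑ c : EdgeIdx n → Bool, configProb q c *
          cutWeight (configW c) L.leaves R.leaves) * g L.leaves.card R.leaves.card
        + (expectedCost g q L + expectedCost g q R) := by
      simp only [expectedCost, key, Finset.sum_add_distrib, ← Finset.sum_mul]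
    rw [expand, hcut, ihL, ihR, treeCost]
    ring

end AuxProof3
noncomputable section AuxProof4

/-- Cluster-level expected weight function of an HSBM. -/
def hsbmQ {k : ℕ} (M : HSBM k) : Fin k → Fin k → ℝ := fun i j =>
  if i = j then M.p i else M.Wtil (lcaSubtree M.Ttil i j)

lemma hsbmQ_mem {k : ℕ} (M : HSBM k) (i : Fin k) : i ∈ M.Ttil.leaves := by
  rw [M.ttil_isClusterTree.2]; exact Finset.mem_univ i

lemma hsbmQ_pos {k : ℕ} (M : HSBM k) (i j : Fin k) : 0 < hsbmQ M i j := by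
  unfold hsbmQ
  by_cases h : i = j
  · rw [if_pos h]; exact M.p_pos i
  · rw [if_neg h]
    obtain ⟨L, R, hLR, hsub⟩ :=
      ClusterTree.lcaSubtree_node_of_ne M.Ttil i j (hsbmQ_mem M i) (hsbmQ_mem M j) h
    rw [hLR]
    exact M.wtil_pos L R hsub

lemma hsbmQ_le_one {k : ℕ} (M : HSBM k) (i j : Fin k) : hsbmQ M i j ≤ 1 := by
  unfold hsbmQ
  by_cases h : i = j
  · rw [if_pos h]; exact M.p_le_one i
  · rw [if_neg h]
    obtain ⟨L, R, hLR, hsub⟩ :=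
      ClusterTree.lcaSubtree_node_of_ne M.Ttil i j (hsbmQ_mem M i) (hsbmQ_mem M j) h
    rw [hLR]
    exact (M.wtil_lt_one L R hsub).le

lemma hsbmQ_symm {k : ℕ} (M : HSBM k) (i j : Fin k) : hsbmQ M i j = hsbmQ M j i := by
  unfold hsbmQ
  by_cases h : i = j
  · rw [if_pos h, if_pos h.symm, h]
  · rw [if_neg h, if_neg (Ne.symm h), ClusterTree.lcaSubtree_comm]

lemma hsbmQ_min_le {k : ℕ} (M : HSBM k) (i j l : Fin k) :
    min (hsbmQ M i l) (hsbmQ M j l) ≤ hsbmQ M i j :=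
  ClusterTree.min_Q_le M.ttil_isClusterTree.1 M.wtil_mono M.p_gt_parent
    M.Ttil (ClusterTree.isSubtreeOf_refl _) i j l
    (hsbmQ_mem M i) (hsbmQ_mem M j) (hsbmQ_mem M l)

lemma edgeProb_eq {k : ℕ} (M : HSBM k) (α : ℝ) {n : ℕ} (ψ : Fin n → Fin k)
    (x y : Fin n) : M.edgeProb α ψ x y = α * hsbmQ M (ψ x) (ψ y) := by
  unfold HSBM.edgeProb hsbmQ
  by_cases h : ψ x = ψ y
  · rw [if_pos h, if_pos h]
  · rw [if_neg h, if_neg h]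

/-- The symmetrized expected graph of an HSBM is generated from a minimal
ultrametric. -/
lemma hsbm_genMinUltra {k : ℕ} (M : HSBM k) (α : ℝ) (hα0 : 0 < α) (hα1 : α ≤ 1)
    {n : ℕ} (ψ : Fin n → Fin k) :
    GeneratedFromMinimalUltrametric
      (fun u v : Fin n => if u = v then 0 else M.edgeProb α ψ u v) := by
  classical
  have hpos : ∀ x y : Fin n, 0 < α * hsbmQ M (ψ x) (ψ y) :=
    fun x y => mul_pos hα0 (hsbmQ_pos M _ _)
  have hle1 : ∀ x y : Fin n, α * hsbmQ M (ψ x) (ψ y) ≤ 1 := by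
    intro x y
    have h1 := hsbmQ_pos M (ψ x) (ψ y)
    have h2 := hsbmQ_le_one M (ψ x) (ψ y)
    nlinarith
  set d : Fin n → Fin n → ℝ :=
    fun x y => if x = y then 0 else 2 - α * hsbmQ M (ψ x) (ψ y) with hd
  set f : ℝ → ℝ := fun a => min 1 (max 0 (2 - a)) with hf
  have hd_val : ∀ x y : Fin n, x ≠ y → d x y = 2 - α * hsbmQ M (ψ x) (ψ y) := by
    intro x y h; rw [hd]; simp only [if_neg h]
  have hf_val : ∀ x y : Fin n, x ≠ y → f (d x y) = α * hsbmQ M (ψ x) (ψ y) := by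
    intro x y h
    rw [hd_val x y h, hf]
    have h1 := hpos x y
    have h2 := hle1 x y
    simp only []
    rw [show (2 : ℝ) - (2 - α * hsbmQ M (ψ x) (ψ y)) = α * hsbmQ M (ψ x) (ψ y) by ring,
      max_eq_right h1.le, min_eq_right h2]
  have hminα : ∀ x y z : Fin n,
      min (α * hsbmQ M (ψ x) (ψ z)) (α * hsbmQ M (ψ y) (ψ z)) ≤
        α * hsbmQ M (ψ x) (ψ y) := by
    intro x y z
    have hm := hsbmQ_min_le M (ψ x) (ψ y) (ψ z)
    rcases le_total (hsbmQ M (ψ x) (ψ z)) (hsbmQ M (ψ y) (ψ z)) with h | h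
    · rw [min_eq_left h] at hm
      refine (min_le_left _ _).trans ?_
      nlinarith
    · rw [min_eq_right h] at hm
      refine (min_le_right _ _).trans ?_
      nlinarith
  have hd_nonneg : ∀ x y : Fin n, 0 ≤ d x y := by
    intro x y
    by_cases h : x = y
    · rw [hd]; simp [h]
    · rw [hd_val x y h]
      have := hle1 x y
      linarith
  have H1 : ∀ x : Fin n, d x x = 0 := by
    intro x; rw [hd]; simp
  have H2 : ∀ x y : Fin n, d x y = 0 → x = y := by
    intro x y hxy
    by_contra h
    rw [hd_val x y h] at hxy
    have := hle1 x y
    linarith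
  have H3 : ∀ x y : Fin n, d x y = d y x := by
    intro x y
    by_cases h : x = y
    · subst h; rfl
    · rw [hd_val x y h, hd_val y x (Ne.symm h), hsbmQ_symm]
  have H5 : ∀ x y z : Fin n, d x y ≤ max (d x z) (d y z) := by
    intro x y z
    by_cases hxy : x = y
    · subst hxy
      rw [H1]
      exact le_max_of_le_left (hd_nonneg x z)
    by_cases hxz : x = z
    · subst hxz
      rw [H1]
      refine le_max_of_le_right ?_
      rw [H3 x y]
    by_cases hyz : y = z
    · subst hyz
      rw [H1]
      exact le_max_of_le_left le_rfl
    · rw [hd_val x y hxy, hd_val x z hxz, hd_val y z hyz]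
      rcases le_total (α * hsbmQ M (ψ x) (ψ z)) (α * hsbmQ M (ψ y) (ψ z)) with h | h
      · have hm := hminα x y z
        rw [min_eq_left h] at hm
        exact le_max_of_le_left (by linarith)
      · have hm := hminα x y z
        rw [min_eq_right h] at hm
        exact le_max_of_le_right (by linarith)
  have H6 : ∀ a b : ℝ, 0 ≤ a → a ≤ b → f b ≤ f a := by
    intro a b _ hab
    rw [hf]
    exact min_le_min le_rfl (max_le_max le_rfl (by linarith))
  have H7 : ∀ a : ℝ, 0 ≤ a → 0 ≤ f a := by
    intro a _
    rw [hf]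
    exact le_min zero_le_one (le_max_left 0 _)
  have H8 : ∀ x y : Fin n, x ≠ y →
      (if x = y then 0 else M.edgeProb α ψ x y) = f (d x y) := by
    intro x y hxy
    rw [if_neg hxy, hf_val x y hxy, edgeProb_eq]
  have H9 : ∀ u v u' v' : Fin n, u ≠ v → u' ≠ v' →
      f (d u v) = f (d u' v') → d u v = d u' v' := by
    intro u v u' v' huv hu'v' hEq
    rw [hf_val u v huv, hf_val u' v' hu'v'] at hEq
    rw [hd_val u v huv, hd_val u' v' hu'v', hEq]
  exact ⟨d, f, ⟨H1, H2, H3, hd_nonneg, H5⟩, H6, H7, H8, H9⟩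

lemma isGenerating_congr {V : Type} [DecidableEq V] {w w' : V → V → ℝ}
    (h : ∀ x y : V, x ≠ y → w x y = w' x y) (T : ClusterTree V) :
    IsGenerating w T ↔ IsGenerating w' T := by
  constructor
  · rintro ⟨W, h1, h2, h3⟩
    exact ⟨W, h1, h2, fun x y hx hy hxy => (h x y hxy) ▸ h3 x y hx hy hxy⟩
  · rintro ⟨W, h1, h2, h3⟩
    exact ⟨W, h1, h2, fun x y hx hy hxy => (h x y hxy).symm ▸ h3 x y hx hy hxy⟩

end AuxProof4
/-- Proposition 1, CKMM: for an admissible cost function, a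
ground-truth tree of a graph generated by an HSBM minimizes the expected cost
`E[Γ(·) | ψ]`, and a tree attains this minimum iff it is a ground-truth tree
(a generating tree for the expected graph). -/
theorem statement8 (g : ℕ → ℕ → ℝ) (hg : ∀ a b : ℕ, 0 ≤ g a b) (hadm : Admissible g)
    (k : ℕ) (hk : 0 < k) (M : HSBM k)
    (α : ℝ) (hα0 : 0 < α) (hα1 : α ≤ 1)
    (n : ℕ) (ψ : Fin n → Fin k) (hψ : Function.Surjective ψ)
    (T : ClusterTree (Fin n)) (hT : IsClusterTree T)
    (hgt : IsGenerating (M.edgeProb α ψ) T) :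
    (∀ T' : ClusterTree (Fin n), IsClusterTree T' →
      expectedCost g (M.edgeProb α ψ) T ≤ expectedCost g (M.edgeProb α ψ) T') ∧
    (∀ T' : ClusterTree (Fin n), IsClusterTree T' →
      (expectedCost g (M.edgeProb α ψ) T = expectedCost g (M.edgeProb α ψ) T' ↔
        IsGenerating (M.edgeProb α ψ) T')) := by
  classical
  set q : Fin n → Fin n → ℝ := M.edgeProb α ψ with hq
  set q' : Fin n → Fin n → ℝ := fun u v => if u = v then 0 else q u v with hq'
  have hsymm : ∀ u v : Fin n, q u v = q v u := by
    intro u v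
    rw [hq]
    rw [edgeProb_eq, edgeProb_eq, hsbmQ_symm]
  have hexp : ∀ T'' : ClusterTree (Fin n),
      expectedCost g q T'' = treeCost q' g T'' := fun T'' =>
    expectedCost_eq_treeCost g q hsymm T''
  have hgen : GeneratedFromMinimalUltrametric q' := hsbm_genMinUltra M α hα0 hα1 ψ
  have hcongr : ∀ T'' : ClusterTree (Fin n),
      IsGenerating q' T'' ↔ IsGenerating q T'' := fun T'' =>
    isGenerating_congr (fun x y hxy => by rw [hq']; simp only [if_neg hxy]) T''
  have hadm' := hadm (Fin n) q' hgen
  have hTmin : ∀ T' : ClusterTree (Fin n), IsClusterTree T' →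
      treeCost q' g T ≤ treeCost q' g T' :=
    (hadm' T hT).mpr ((hcongr T).mpr hgt)
  constructor
  · intro T' hT'
    rw [hexp T, hexp T']
    exact hTmin T' hT'
  · intro T' hT'
    constructor
    · intro heq
      have hmin' : ∀ T'' : ClusterTree (Fin n), IsClusterTree T'' →
          treeCost q' g T' ≤ treeCost q' g T'' := by
        intro T'' hT''
        calc treeCost q' g T' = treeCost q' g T := by
              rw [← hexp T', ← hexp T, heq]
          _ ≤ treeCost q' g T'' := hTmin T'' hT''
      exact (hcongr T').mp ((hadm' T' hT').mp hmin')
    · intro hgen'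
      have hmin' := (hadm' T' hT').mpr ((hcongr T').mpr hgen')
      rw [hexp T, hexp T']
      exact le_antisymm (hTmin T' hT') (hmin' T hT)
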